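/- arXiv:1903.05332 — 2 statements merged into one kernel-verified Lean document; each statement's English description precedes it below -/
import Mathlib

section
/- Let D be an acyclic bipartite tournament with bipartition (V_1,V_2), sink sequence (W_0,...,W_{\zeta(D)}), and let m be a positive integer with m < \zeta(D), and \mathcal{W}_m = W_0 \cup ... \cup W_{m-1}. Then two distinct vertices are adjacent in C^m(D) iff both lie in V_1 \setminus \mathcal{W}_m or both lie in V_2 \setminus \mathcal{W}_m; in particular C^m(D) is isomorphic to the disjoint union of two complete graphs and isolated vertices. -/
/-- `walkN D n u v` : there is a directed walk of length `n` from `u` to `v` in the digraph `D`. -/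
def walkN {V : Type*} (D : V → V → Prop) : ℕ → V → V → Prop
  | 0 => fun u v => u = v
  | n+1 => fun u v => ∃ w, D u w ∧ walkN D n w v

/-- The `m`-step competition graph of the digraph `D`. -/
def cmGraph {V : Type*} (D : V → V → Prop) (m : ℕ) : SimpleGraph V where
  Adj u v := u ≠ v ∧ ∃ z, walkN D m u z ∧ walkN D m v z
  symm := by
    constructor
    intro u v h
    exact ⟨Ne.symm h.1, h.2.imp fun z hz => ⟨hz.2, hz.1⟩⟩
  loopless := by constructor; intro v h; exact h.1 rfl

/-- Sinks of the subdigraph of `D` induced by `S`. -/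
def sinks {V : Type*} (D : V → V → Prop) (S : Set V) : Set V :=
  {v ∈ S | ∀ w ∈ S, ¬ D v w}

/-- The digraph sequence `D_0, D_1, …` (as vertex sets) associated with the sink sequence. -/
def Dseq {V : Type*} (D : V → V → Prop) : ℕ → Set V
  | 0 => Set.univ
  | n+1 => Dseq D n \ sinks D (Dseq D n)

/-- The sink sequence `W_0, W_1, …` of `D`. -/
def Wseq {V : Type*} (D : V → V → Prop) (n : ℕ) : Set V := sinks D (Dseq D n)

/-- `k` is the sink elimination index `ζ(D)`. -/
def IsSinkElimIndex {V : Type*} (D : V → V → Prop) (k : ℕ) : Prop :=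
  (Wseq D k = Dseq D k ∨ Wseq D k = ∅) ∧
  ∀ j < k, Wseq D j ≠ Dseq D j ∧ Wseq D j ≠ ∅

/-- A digraph is acyclic iff it has no directed closed walk of positive length. -/
def DigraphAcyclic {V : Type*} (D : V → V → Prop) : Prop :=
  ∀ v : V, ∀ n : ℕ, 0 < n → ¬ walkN D n v v

/-- `D` is a bipartite tournament with bipartition `(V1, V2)`. -/
structure IsBipartiteTournament {V : Type*} (D : V → V → Prop) (V1 V2 : Set V) : Prop where
  nonempty1 : V1.Nonempty
  nonempty2 : V2.Nonempty
  union_eq : V1 ∪ V2 = Set.univ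
  disj : V1 ∩ V2 = ∅
  oriented : ∀ x ∈ V1, ∀ y ∈ V2, Xor' (D x y) (D y x)
  no_intra : ∀ x y, D x y → (x ∈ V1 ∧ y ∈ V2) ∨ (x ∈ V2 ∧ y ∈ V1)

/-- The competition graph sequence of `D` is eventually equal, starting from `q`. -/
def PeriodicFrom {V : Type*} (D : V → V → Prop) (q : ℕ) : Prop :=
  ∃ r, 0 < r ∧ ∀ i : ℕ, cmGraph D (q + i) = cmGraph D (q + r + i)

/-- `q` is the competition index of `D`. -/
def IsCindex {V : Type*} (D : V → V → Prop) (q : ℕ) : Prop :=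
  0 < q ∧ PeriodicFrom D q ∧ ∀ q', 0 < q' → PeriodicFrom D q' → q ≤ q'

/-- `p` is the competition period of `D`, given that `q` is its competition index. -/
def IsCperiod {V : Type*} (D : V → V → Prop) (q p : ℕ) : Prop :=
  0 < p ∧ cmGraph D q = cmGraph D (q + p) ∧
    ∀ p', 0 < p' → cmGraph D q = cmGraph D (q + p') → p ≤ p'

/-!
A vertex survives the first `m` sink removals, i.e. lies in `D_m = V \ 𝒲_m`, exactly when a walk
of length `m` starts at it, and walks in a bipartite digraph alternate between the parts; so two
vertices adjacent in `C^m(D)` lie in `D_m` and in the same part. Conversely, a sink `z₁ ∈ W_1`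
has an out-neighbour `y ∈ W_0` in the other part, and every non-sink of `D` has an arc to
whichever of `y`, `z₁` lies in its opposite part. Two vertices of `D_m` in the same part walk
`m - 1` steps to non-sinks lying in a common part, and one more step reaches a common vertex.
-/

section Digraph

variable {V : Type*} {D : V → V → Prop}

theorem walkN_one {u z : V} : walkN D 1 u z ↔ D u z := by
  simp [walkN]

theorem walkN_succ_right {n : ℕ} {u z : V} :
    walkN D (n + 1) u z ↔ ∃ w, walkN D n u w ∧ D w z := by
  induction n generalizing u with
  | zero => simp [walkN]
  | succ n ih =>
    constructor
    · rintro ⟨x, hux, hx⟩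
      obtain ⟨w, hxw, hwz⟩ := ih.1 hx
      exact ⟨w, ⟨x, hux, hxw⟩, hwz⟩
    · rintro ⟨w, ⟨x, hux, hxw⟩, hwz⟩
      exact ⟨x, hux, ih.2 ⟨w, hxw, hwz⟩⟩

theorem mem_Dseq_iff_exists_walkN {n : ℕ} {u : V} : u ∈ Dseq D n ↔ ∃ z, walkN D n u z := by
  induction n generalizing u with
  | zero => exact ⟨fun _ => ⟨u, rfl⟩, fun _ => Set.mem_univ u⟩
  | succ n ih =>
    have hsucc : u ∈ Dseq D (n + 1) ↔ u ∈ Dseq D n ∧ ∃ w ∈ Dseq D n, D u w := by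
      simp [Dseq, sinks]
    simp only [hsucc, ih]
    constructor
    · rintro ⟨-, w, ⟨z, hwz⟩, huw⟩
      exact ⟨z, w, huw, hwz⟩
    · rintro ⟨z, w, huw, hwz⟩
      obtain ⟨y, huy, -⟩ := walkN_succ_right.1 ⟨w, huw, hwz⟩
      exact ⟨⟨y, huy⟩, w, ⟨z, hwz⟩, huw⟩

theorem Dseq_eq_compl_iUnion_Wseq (n : ℕ) :
    Dseq D n = (⋃ i ∈ Finset.range n, Wseq D i)ᶜ := by
  induction n with
  | zero => simp [Dseq]
  | succ n ih =>
    rw [Finset.range_add_one, Finset.set_biUnion_insert, Set.compl_union, ← ih, Set.inter_comm,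
      ← Set.sdiff_eq]
    rfl

end Digraph

namespace IsBipartiteTournament

variable {V : Type*} {D : V → V → Prop} {V1 V2 : Set V} (hD : IsBipartiteTournament D V1 V2)
include hD

theorem mem_V2_iff {x : V} : x ∈ V2 ↔ x ∉ V1 := by
  have hx : x ∈ V1 ∪ V2 := hD.union_eq ▸ Set.mem_univ x
  have hx' : x ∉ V1 ∩ V2 := hD.disj ▸ Set.notMem_empty x
  simp only [Set.mem_union, Set.mem_inter_iff] at hx hx'
  tauto

theorem mem_V1_iff_of_adj {x y : V} (h : D x y) : y ∈ V1 ↔ x ∉ V1 := by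
  have := hD.no_intra x y h
  simp only [hD.mem_V2_iff] at this
  tauto

theorem adj_or_adj {x y : V} (h : x ∈ V1 ↔ y ∉ V1) : D x y ∨ D y x := by
  by_cases hx : x ∈ V1
  · exact (hD.oriented x hx y (hD.mem_V2_iff.2 (h.1 hx))).imp And.left And.left
  · exact (hD.oriented y (by tauto) x (hD.mem_V2_iff.2 hx)).symm.imp And.left And.left

theorem mem_V1_iff_of_walkN {n : ℕ} {u w : V} (h : walkN D n u w) :
    w ∈ V1 ↔ (u ∈ V1 ↔ Even n) := by
  induction n generalizing w with
  | zero => cases h; simp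
  | succ n ih =>
    obtain ⟨x, hux, hxw⟩ := walkN_succ_right.1 h
    rw [hD.mem_V1_iff_of_adj hxw, ih hux, Nat.even_add_one]
    tauto

theorem adj_of_mem_Wseq {j : ℕ} {w z : V} (hw : w ∈ Dseq D j) (hz : z ∈ Wseq D j)
    (h : w ∈ V1 ↔ z ∉ V1) : D w z :=
  (hD.adj_or_adj h).resolve_right (hz.2 w hw)

theorem exists_common_outNeighbor (h1 : (Wseq D 1).Nonempty) {a b : V} (ha : a ∈ Dseq D 1)
    (hb : b ∈ Dseq D 1) (hab : a ∈ V1 ↔ b ∈ V1) : ∃ z, D a z ∧ D b z := by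
  obtain ⟨z₁, hz₁⟩ := h1
  obtain ⟨y, hy⟩ := mem_Dseq_iff_exists_walkN.1 hz₁.1
  rw [walkN_one] at hy
  have hyW : y ∈ Wseq D 0 := by
    by_contra hyW
    exact hz₁.2 y ⟨Set.mem_univ y, hyW⟩ hy
  have hzy := hD.mem_V1_iff_of_adj hy
  by_cases ha₁ : a ∈ V1 ↔ z₁ ∈ V1
  · exact ⟨y, hD.adj_of_mem_Wseq (j := 0) (Set.mem_univ a) hyW (by tauto),
      hD.adj_of_mem_Wseq (j := 0) (Set.mem_univ b) hyW (by tauto)⟩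
  · exact ⟨z₁, hD.adj_of_mem_Wseq ha hz₁ (by tauto), hD.adj_of_mem_Wseq hb hz₁ (by tauto)⟩

theorem cmGraph_adj_iff (h1 : (Wseq D 1).Nonempty) {m : ℕ} (hm : 0 < m) {u v : V} :
    (cmGraph D m).Adj u v ↔ u ≠ v ∧ u ∈ Dseq D m ∧ v ∈ Dseq D m ∧ (u ∈ V1 ↔ v ∈ V1) := by
  simp only [cmGraph, mem_Dseq_iff_exists_walkN, and_congr_right_iff]
  rintro -
  constructor
  · rintro ⟨z, hu, hv⟩
    have := hD.mem_V1_iff_of_walkN hu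
    have := hD.mem_V1_iff_of_walkN hv
    exact ⟨⟨z, hu⟩, ⟨z, hv⟩, by tauto⟩
  · rintro ⟨⟨zu, hu⟩, ⟨zv, hv⟩, huv⟩
    obtain ⟨n, rfl⟩ := Nat.exists_eq_add_of_lt hm
    obtain ⟨a, hua, haz⟩ := walkN_succ_right.1 hu
    obtain ⟨b, hvb, hbz⟩ := walkN_succ_right.1 hv
    have hab : a ∈ V1 ↔ b ∈ V1 := by
      rw [hD.mem_V1_iff_of_walkN hua, hD.mem_V1_iff_of_walkN hvb, huv]
    obtain ⟨z, haz, hbz⟩ := hD.exists_common_outNeighbor h1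
      (mem_Dseq_iff_exists_walkN.2 ⟨zu, walkN_one.2 haz⟩)
      (mem_Dseq_iff_exists_walkN.2 ⟨zv, walkN_one.2 hbz⟩) hab
    exact ⟨z, walkN_succ_right.2 ⟨a, hua, haz⟩, walkN_succ_right.2 ⟨b, hvb, hbz⟩⟩

end IsBipartiteTournament

theorem cmGraph_below_zeta_general {V : Type*} (D : V → V → Prop)
    (V1 V2 : Set V) (hD : IsBipartiteTournament D V1 V2)
    (k : ℕ) (hk : IsSinkElimIndex D k)
    (m : ℕ) (hm : 0 < m) (hmk : m < k) :
    ∀ u v : V, (cmGraph D m).Adj u v ↔ u ≠ v ∧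
      ((u ∈ V1 \ ⋃ i ∈ Finset.range m, Wseq D i ∧
        v ∈ V1 \ ⋃ i ∈ Finset.range m, Wseq D i) ∨
       (u ∈ V2 \ ⋃ i ∈ Finset.range m, Wseq D i ∧
        v ∈ V2 \ ⋃ i ∈ Finset.range m, Wseq D i)) := by
  intro u v
  have h1 : (Wseq D 1).Nonempty := Set.nonempty_iff_ne_empty.2 (hk.2 1 (by omega)).2
  simp only [hD.cmGraph_adj_iff h1 hm, Set.mem_sdiff, ← Set.mem_compl_iff,
    ← Dseq_eq_compl_iUnion_Wseq, hD.mem_V2_iff]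
  tauto

/-- For an acyclic bipartite tournament and a positive `m < ζ(D)`, two distinct
vertices are adjacent in `C^m(D)` iff both lie in `V1 \ 𝒲_m` or both lie in `V2 \ 𝒲_m`,
where `𝒲_m = W_0 ∪ ⋯ ∪ W_{m-1}`. -/
theorem cmGraph_below_zeta {V : Type*} [Fintype V] (D : V → V → Prop)
    (V1 V2 : Set V) (hD : IsBipartiteTournament D V1 V2)
    (hacyc : DigraphAcyclic D)
    (k : ℕ) (hk : IsSinkElimIndex D k)
    (m : ℕ) (hm : 0 < m) (hmk : m < k) :
    ∀ u v : V, (cmGraph D m).Adj u v ↔ u ≠ v ∧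
      ((u ∈ V1 \ ⋃ i ∈ Finset.range m, Wseq D i ∧
        v ∈ V1 \ ⋃ i ∈ Finset.range m, Wseq D i) ∨
       (u ∈ V2 \ ⋃ i ∈ Finset.range m, Wseq D i ∧
        v ∈ V2 \ ⋃ i ∈ Finset.range m, Wseq D i)) :=
  cmGraph_below_zeta_general D V1 V2 hD k hk m hm hmk
end

section
/- Let D be a bipartite tournament with bipartition (V_1,V_2) and no sinks, and let m >= 2 be an integer. Then for each i in {1,2}, the subgraph of C^m(D) induced by V_i is a complete graph or a (not necessarily disjoint) union of two complete graphs. -/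
/-!
Fix two non-adjacent vertices `u, v` of `V₁` in `C^m(D)`. Since `u` and `v` have no common
out-neighbour, every vertex of `V₂` beats `u` or `v`; and since two non-adjacent vertices `s, t`
of `V₁` cannot reach a common vertex in two steps, the out-neighbours of `s` all beat the same one
of `u, v` and those of `t` the other one. Hence any non-adjacent pair `s, t` splits as
`N⁺(s) ⊆ N⁺(u)`, `N⁺(t) ⊆ N⁺(v)` or the other way round (written `D s ≤ D u` etc.), and enlarging the out-neighbourhood
preserves adjacency in `C^m(D)`. From this, the closed neighbourhoods of `u` and of `v` in `V₁`
are two cliques covering `V₁` and all its edges.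
-/

section

variable {V : Type*} {D : V → V → Prop}

theorem exists_walkN (hsink : ∀ v, ∃ w, D v w) : ∀ (n : ℕ) (v : V), ∃ z, walkN D n v z
  | 0, v => ⟨v, rfl⟩
  | n + 1, v => by
    obtain ⟨w, hvw⟩ := hsink v
    obtain ⟨z, hwz⟩ := exists_walkN hsink n w
    exact ⟨z, w, hvw, hwz⟩

theorem walkN_add {b : ℕ} {w z : V} (hwz : walkN D b w z) :
    ∀ {a : ℕ} {u : V}, walkN D a u w → walkN D (a + b) u z
  | 0, _, rfl => by rwa [Nat.zero_add]
  | a + 1, _, ⟨x, hux, hxw⟩ => by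
    rw [Nat.succ_add]
    exact ⟨x, hux, walkN_add hwz hxw⟩

theorem cmGraph_adj_of_walkN (hsink : ∀ v, ∃ w, D v w) {m k : ℕ} (hk : k ≤ m) {u v z : V}
    (huv : u ≠ v) (hu : walkN D k u z) (hv : walkN D k v z) : (cmGraph D m).Adj u v := by
  obtain ⟨z', hz'⟩ := exists_walkN hsink (m - k) z
  rw [← Nat.add_sub_cancel' hk]
  exact ⟨huv, z', walkN_add hz' hu, walkN_add hz' hv⟩

theorem cmGraph_adj_of_out_le (hsink : ∀ v, ∃ w, D v w) {m : ℕ} (hm : 1 ≤ m) {u v w : V}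
    (huv : u ≠ v) (hu : D w ≤ D u) (hv : D w ≤ D v) : (cmGraph D m).Adj u v := by
  obtain ⟨x, hwx⟩ := hsink w
  exact cmGraph_adj_of_walkN hsink hm huv ⟨x, hu x hwx, rfl⟩ ⟨x, hv x hwx, rfl⟩

theorem cmGraph_adj_of_adj_of_out_le {m : ℕ} (hm : 1 ≤ m) {s t c : V} (hsc : s ≠ c)
    (hst : (cmGraph D m).Adj s t) (htc : D t ≤ D c) : (cmGraph D m).Adj s c := by
  obtain ⟨-, z, hs, ht⟩ := hst
  obtain ⟨k, rfl⟩ := Nat.exists_eq_add_of_le' hm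
  obtain ⟨y, hty, hy⟩ := ht
  exact ⟨hsc, z, hs, y, htc y hty, hy⟩

namespace IsBipartiteTournament

variable {V1 V2 : Set V}

theorem swap (hB : IsBipartiteTournament D V1 V2) : IsBipartiteTournament D V2 V1 where
  nonempty1 := hB.nonempty2
  nonempty2 := hB.nonempty1
  union_eq := Set.union_comm V2 V1 ▸ hB.union_eq
  disj := Set.inter_comm V2 V1 ▸ hB.disj
  oriented x hx y hy := (hB.oriented y hy x hx).symm
  no_intra x y hxy := (hB.no_intra x y hxy).symm

theorem mem_right_of_adj (hB : IsBipartiteTournament D V1 V2) {u x : V} (hu : u ∈ V1)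
    (hux : D u x) : x ∈ V2 := by
  rcases hB.no_intra u x hux with ⟨-, hx⟩ | ⟨hu₂, -⟩
  · exact hx
  · exact (Set.notMem_empty u (hB.disj ▸ ⟨hu, hu₂⟩)).elim

theorem adj_iff_not_adj (hB : IsBipartiteTournament D V1 V2) {u x : V} (hu : u ∈ V1)
    (hx : x ∈ V2) : D u x ↔ ¬ D x u :=
  xor_iff_iff_not.1 (hB.oriented u hu x hx)

end IsBipartiteTournament

section NonAdjacentPair

variable {V1 V2 : Set V} {m : ℕ} {u v : V}

theorem out_le_or_out_le_of_not_cmGraph_adj (hB : IsBipartiteTournament D V1 V2)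
    (hsink : ∀ v, ∃ w, D v w) (hm : 2 ≤ m) {s t : V} (hu : u ∈ V1) (hv : v ∈ V1)
    (hs : s ∈ V1) (ht : t ∈ V1) (huv : u ≠ v) (hst : s ≠ t)
    (hnuv : ¬ (cmGraph D m).Adj u v) (hnst : ¬ (cmGraph D m).Adj s t) :
    (D s ≤ D u ∧ D t ≤ D v) ∨ (D s ≤ D v ∧ D t ≤ D u) := by
  have beats_u_or_v : ∀ x ∈ V2, D x u ∨ D x v := by
    intro x hx
    by_contra! h
    exact hnuv (cmGraph_adj_of_walkN hsink (k := 1) (by omega) huv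
      ⟨x, (hB.adj_iff_not_adj hu hx).2 h.1, rfl⟩ ⟨x, (hB.adj_iff_not_adj hv hx).2 h.2, rfl⟩)
  have no_common_target : ∀ {x y c}, D s x → D t y → D x c → D y c → False :=
    fun hsx hty hxc hyc => hnst (cmGraph_adj_of_walkN hsink hm hst
      ⟨_, hsx, _, hxc, rfl⟩ ⟨_, hty, _, hyc, rfl⟩)
  have out_le : ∀ {r w}, r ∈ V1 → w ∈ V1 → (∀ x, D r x → ¬ D x w) → D r ≤ D w :=
    fun hr hw h x hrx => (hB.adj_iff_not_adj hw (hB.mem_right_of_adj hr hrx)).2 (h x hrx)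
  have split : ∀ {a b x₀}, a ∈ V1 → b ∈ V1 → (∀ x ∈ V2, D x a ∨ D x b) →
      D s x₀ → D x₀ a → D s ≤ D b ∧ D t ≤ D a := by
    intro a b x₀ ha hb hab hsx₀ hx₀a
    have hta : ∀ y, D t y → ¬ D y a := fun y hty hya => no_common_target hsx₀ hty hx₀a hya
    obtain ⟨y₀, hty₀⟩ := hsink t
    have hy₀b : D y₀ b := (hab y₀ (hB.mem_right_of_adj ht hty₀)).resolve_left (hta y₀ hty₀)
    exact ⟨out_le hs hb fun x hsx hxb => no_common_target hsx hty₀ hxb hy₀b, out_le ht ha hta⟩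
  obtain ⟨x₀, hsx₀⟩ := hsink s
  rcases beats_u_or_v x₀ (hB.mem_right_of_adj hs hsx₀) with hx₀u | hx₀v
  · exact .inr (split hu hv beats_u_or_v hsx₀ hx₀u)
  · exact .inl (split hv hu (fun x hx => (beats_u_or_v x hx).symm) hsx₀ hx₀v)

theorem out_le_of_notMem_insert_neighborSet (hB : IsBipartiteTournament D V1 V2)
    (hsink : ∀ v, ∃ w, D v w) (hm : 2 ≤ m) {s : V} (hu : u ∈ V1) (hv : v ∈ V1) (hs : s ∈ V1)
    (huv : u ≠ v) (hnuv : ¬ (cmGraph D m).Adj u v)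
    (hsu : s ∉ insert u ((cmGraph D m).neighborSet u)) : D s ≤ D v := by
  obtain ⟨hs_ne, hnus⟩ := not_or.1 hsu
  rcases out_le_or_out_le_of_not_cmGraph_adj hB hsink hm hu hv hs hu huv hs_ne hnuv
    (fun h => hnus h.symm) with ⟨-, hle⟩ | ⟨hle, -⟩
  · exact absurd (cmGraph_adj_of_out_le hsink (by omega) huv le_rfl hle) hnuv
  · exact hle

theorem not_out_le_of_mem_insert_neighborSet (hsink : ∀ v, ∃ w, D v w) (hm : 1 ≤ m) {s : V}
    (huv : u ≠ v) (hnuv : ¬ (cmGraph D m).Adj u v)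
    (hsu : s ∈ insert u ((cmGraph D m).neighborSet u)) : ¬ D s ≤ D v := by
  intro hsv
  rcases hsu with rfl | hus
  · exact hnuv (cmGraph_adj_of_out_le hsink hm huv le_rfl hsv)
  · exact hnuv (cmGraph_adj_of_adj_of_out_le hm huv hus hsv)

theorem isClique_insert_neighborSet_inter (hB : IsBipartiteTournament D V1 V2)
    (hsink : ∀ v, ∃ w, D v w) (hm : 2 ≤ m) (hu : u ∈ V1) (hv : v ∈ V1) (huv : u ≠ v)
    (hnuv : ¬ (cmGraph D m).Adj u v) :
    (cmGraph D m).IsClique (insert u ((cmGraph D m).neighborSet u) ∩ V1) := by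
  rintro s ⟨hsu, hs⟩ t ⟨htu, ht⟩ hst
  by_contra hnst
  have not_le : ∀ {r}, r ∈ insert u ((cmGraph D m).neighborSet u) → ¬ D r ≤ D v :=
    not_out_le_of_mem_insert_neighborSet hsink (by omega) huv hnuv
  rcases out_le_or_out_le_of_not_cmGraph_adj hB hsink hm hu hv hs ht huv hst hnuv hnst
    with ⟨-, htv⟩ | ⟨hsv, -⟩
  · exact not_le htu htv
  · exact not_le hsu hsv

theorem isClique_or_exists_two_cliques_covering (hB : IsBipartiteTournament D V1 V2)
    (hsink : ∀ v, ∃ w, D v w) (hm : 2 ≤ m) :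
    (cmGraph D m).IsClique V1 ∨
      ∃ A B : Set V, A ∪ B = V1 ∧ (cmGraph D m).IsClique A ∧ (cmGraph D m).IsClique B ∧
        ∀ u ∈ V1, ∀ v ∈ V1, (cmGraph D m).Adj u v →
          (u ∈ A ∧ v ∈ A) ∨ (u ∈ B ∧ v ∈ B) := by
  refine or_iff_not_imp_left.2 fun hV1 => ?_
  obtain ⟨u, hu, v, hv, huv, hnuv⟩ : ∃ u ∈ V1, ∃ v ∈ V1, u ≠ v ∧ ¬ (cmGraph D m).Adj u v := by
    simpa [SimpleGraph.IsClique, Set.Pairwise] using hV1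
  have hnvu : ¬ (cmGraph D m).Adj v u := fun h => hnuv h.symm
  set A := insert u ((cmGraph D m).neighborSet u) ∩ V1
  set B := insert v ((cmGraph D m).neighborSet v) ∩ V1
  have le_v : ∀ s ∈ V1, s ∉ A → D s ≤ D v := fun s hs hsA =>
    out_le_of_notMem_insert_neighborSet hB hsink hm hu hv hs huv hnuv fun h => hsA ⟨h, hs⟩
  have le_u : ∀ s ∈ V1, s ∉ B → D s ≤ D u := fun s hs hsB =>
    out_le_of_notMem_insert_neighborSet hB hsink hm hv hu hs huv.symm hnvu fun h => hsB ⟨h, hs⟩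
  have hcover : A ∪ B = V1 := by
    refine (Set.union_subset Set.inter_subset_right Set.inter_subset_right).antisymm
      fun s hs => ?_
    by_contra hsAB
    obtain ⟨hsA, hsB⟩ := not_or.1 hsAB
    exact hnuv (cmGraph_adj_of_out_le hsink (by omega) huv (le_u s hs hsB) (le_v s hs hsA))
  have mem_B : ∀ s ∈ V1, ∀ t ∈ V1, (cmGraph D m).Adj s t → t ∉ A → s ∈ B ∧ t ∈ B := by
    intro s hs t ht hst htA
    refine ⟨⟨?_, hs⟩, (hcover ▸ ht : t ∈ A ∪ B).resolve_left htA⟩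
    by_cases hsv : s = v
    · exact .inl hsv
    · exact .inr (cmGraph_adj_of_adj_of_out_le (by omega) hsv hst (le_v t ht htA)).symm
  refine ⟨A, B, hcover, isClique_insert_neighborSet_inter hB hsink hm hu hv huv hnuv,
    isClique_insert_neighborSet_inter hB hsink hm hv hu huv.symm hnvu, fun s hs t ht hst => ?_⟩
  by_cases hsA : s ∈ A
  · by_cases htA : t ∈ A
    · exact .inl ⟨hsA, htA⟩
    · exact .inr (mem_B s hs t ht hst htA)
  · exact .inr (mem_B t ht s hs hst.symm hsA).symm

end NonAdjacentPair

end

theorem induced_parts_union_of_two_cliques_general {V : Type*} (D : V → V → Prop)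
    (V1 V2 : Set V) (hD : IsBipartiteTournament D V1 V2)
    (hnosink : ∀ v : V, ∃ w : V, D v w)
    (m : ℕ) (hm : 2 ≤ m) :
    ∀ P ∈ ({V1, V2} : Set (Set V)),
      (cmGraph D m).IsClique P ∨
      ∃ A B : Set V, A ∪ B = P ∧ (cmGraph D m).IsClique A ∧ (cmGraph D m).IsClique B ∧
        ∀ u ∈ P, ∀ v ∈ P, (cmGraph D m).Adj u v →
          (u ∈ A ∧ v ∈ A) ∨ (u ∈ B ∧ v ∈ B) := by
  rintro P (rfl | rfl)
  · exact isClique_or_exists_two_cliques_covering hD hnosink hm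
  · exact isClique_or_exists_two_cliques_covering hD.swap hnosink hm

/-- For a bipartite tournament without sinks and `m ≥ 2`, the subgraph of
`C^m(D)` induced by each partite set is a complete graph or a (not necessarily disjoint)
union of two complete graphs. -/
theorem induced_parts_union_of_two_cliques {V : Type*} [Fintype V] (D : V → V → Prop)
    (V1 V2 : Set V) (hD : IsBipartiteTournament D V1 V2)
    (hnosink : ∀ v : V, ∃ w : V, D v w)
    (m : ℕ) (hm : 2 ≤ m) :
    ∀ P ∈ ({V1, V2} : Set (Set V)),
      (cmGraph D m).IsClique P ∨
      ∃ A B : Set V, A ∪ B = P ∧ (cmGraph D m).IsClique A ∧ (cmGraph D m).IsClique B ∧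
        ∀ u ∈ P, ∀ v ∈ P, (cmGraph D m).Adj u v →
          (u ∈ A ∧ v ∈ A) ∨ (u ∈ B ∧ v ∈ B) :=
  induced_parts_union_of_two_cliques_general D V1 V2 hD hnosink m hm
end
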